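/- Let n ≥ 1, let D be a real n×n diagonal matrix with diagonal entries d_k > 0, let τ > 0, and let F ∈ ℝⁿ have all components strictly positive. Set C_k = (∑_j F_j)/d_k and 𝒞 = { P ∈ ℝⁿ : 0 ≤ P_k ≤ C_k for all k }. Suppose Ã is a function from ℝⁿ to real n×n matrices such that: (i) Ã is continuous on 𝒞; (ii) for every P ∈ 𝒞 the matrix Ã(P) has nonpositive off-diagonal entries and nonnegative column sums; (iii) there are constants C ≥ 0 and C_L ≥ 1 with ‖Ã(P)‖_{∞,op} ≤ C for all P ∈ 𝒞, ‖(D + τÃ(P))⁻¹F‖_∞ ≤ C for all P ∈ 𝒞, and ‖Ã(P) − Ã(Q)‖_{∞,op} ≤ C_L‖P − Q‖_∞ for all P, Q ∈ 𝒞; and (iv) 0 < τ < d/(2C_LC), where d = min_k d_k. Then for every starting vector P⁰ ∈ 𝒞, the Gummel iterates Pˡ⁺¹ = (D + τÃ(Pˡ))⁻¹F are well defined, satisfy 0 < Pˡ_k ≤ C_k for all l ≥ 1 and all k, and converge to the unique P* ∈ 𝒞 with (D + τÃ(P*))P* = F. -/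

import Mathlib

open Matrix BigOperators

/-- The closed box `∏_k [0, c_k]` in `ℝⁿ`. -/
def box (n : ℕ) (c : Fin n → ℝ) : Set (Fin n → ℝ) :=
  {P | ∀ k, 0 ≤ P k ∧ P k ≤ c k}

/-- The maximum norm `‖v‖_∞ = max_k |v_k|` of a vector in `ℝⁿ`. -/
def vecInfNorm {n : ℕ} [NeZero n] (v : Fin n → ℝ) : ℝ :=
  Finset.univ.sup' Finset.univ_nonempty fun k => |v k|

/-- The operator norm induced by `‖·‖_∞`, i.e. the maximum absolute row sum
`‖M‖_{∞,op} = max_i ∑_j |M_{ij}|`. -/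
def matInfNorm {n : ℕ} [NeZero n] (M : Matrix (Fin n) (Fin n) ℝ) : ℝ :=
  Finset.univ.sup' Finset.univ_nonempty fun i => ∑ j, |M i j|

/-- The Gummel fixed-point map `φ(P) = (D + τ Ã(P))⁻¹ F`. -/
noncomputable def gummelMap {n : ℕ} (d : Fin n → ℝ) (τ : ℝ)
    (Atil : (Fin n → ℝ) → Matrix (Fin n) (Fin n) ℝ) (F : Fin n → ℝ) :
    (Fin n → ℝ) → (Fin n → ℝ) :=
  fun P => (Matrix.diagonal d + τ • Atil P)⁻¹ *ᵥ F

/-! For `P` in the box, `D + τ Ã(P)` has nonpositive off-diagonal entries and column sums at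
least `d_k > 0`. Such a matrix is invertible, and the solution of `(D + τ Ã(P)) x = F` with
`F > 0` is positive: summing the equations over the rows where `x ≤ 0` would give a
nonpositive left-hand side. Summing all the equations then bounds `d_k x_k` by `∑ F`, so the
Gummel map `φ` sends the box into itself. Subtracting the equations for `φ P` and `φ Q` gives
`D (φ P - φ Q) = τ (Ã(Q) - Ã(P)) φ Q - τ Ã(P) (φ P - φ Q)`, hence
`‖φ P - φ Q‖ ≤ (2 τ C_L C / d) ‖P - Q‖` as soon as `τ C ≤ d / 2`. Below `τ_C` the map `φ` is
therefore a contraction of the closed box, and Banach's fixed-point theorem applies. -/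

open Finset Function Filter Topology

namespace Matrix

variable {ι : Type*}

theorem sum_mulVec_eq_sum_colSum_mul [Fintype ι] (M : Matrix ι ι ℝ) (x : ι → ℝ) :
    ∑ i, (M *ᵥ x) i = ∑ j, (∑ i, M i j) * x j := by
  simp only [mulVec, dotProduct, Finset.sum_mul]
  exact Finset.sum_comm

theorem pos_of_mulVec_pos [Fintype ι] (M : Matrix ι ι ℝ)
    (hoff : ∀ i j, i ≠ j → M i j ≤ 0) (hcol : ∀ j, 0 ≤ ∑ i, M i j) {x : ι → ℝ}
    (hMx : ∀ i, 0 < (M *ᵥ x) i) (k : ι) : 0 < x k := by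
  classical
  by_contra! hxk
  set S := univ.filter fun i => x i ≤ 0
  have hS : S.Nonempty := ⟨k, by simpa [S] using hxk⟩
  have hterm : ∀ j, (∑ i ∈ S, M i j) * x j ≤ 0 := by
    intro j
    by_cases hj : x j ≤ 0
    · refine mul_nonpos_of_nonneg_of_nonpos ?_ hj
      have hrest : ∑ i ∈ univ.filter (fun i => ¬ x i ≤ 0), M i j ≤ 0 :=
        sum_nonpos fun i hi => hoff i j fun hij => (mem_filter.1 hi).2 (hij ▸ hj)
      linarith [sum_filter_add_sum_filter_not univ (fun i => x i ≤ 0) (fun i => M i j), hcol j]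
    · refine mul_nonpos_of_nonpos_of_nonneg ?_ (not_le.1 hj).le
      exact sum_nonpos fun i hi => hoff i j fun hij => hj (hij ▸ (mem_filter.1 hi).2)
  have hpos : 0 < ∑ i ∈ S, (M *ᵥ x) i := sum_pos (fun i _ => hMx i) hS
  have hsum : ∑ i ∈ S, (M *ᵥ x) i = ∑ j, (∑ i ∈ S, M i j) * x j := by
    simp only [mulVec, dotProduct, Finset.sum_mul]
    exact Finset.sum_comm
  linarith [sum_nonpos fun j (_ : j ∈ univ) => hterm j]

theorem colSum_mul_le_sum_mulVec [Fintype ι] (M : Matrix ι ι ℝ)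
    (hcol : ∀ j, 0 ≤ ∑ i, M i j) {x : ι → ℝ} (hx : ∀ j, 0 ≤ x j) (k : ι) :
    (∑ i, M i k) * x k ≤ ∑ i, (M *ᵥ x) i := by
  rw [M.sum_mulVec_eq_sum_colSum_mul]
  exact single_le_sum (f := fun j => (∑ i, M i j) * x j)
    (fun j _ => mul_nonneg (hcol j) (hx j)) (mem_univ k)

theorem isUnit_det_of_colSum_pos [Fintype ι] [DecidableEq ι] (M : Matrix ι ι ℝ)
    (hoff : ∀ i j, i ≠ j → M i j ≤ 0) (hcol : ∀ j, 0 < ∑ i, M i j) : IsUnit M.det := by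
  refine isUnit_iff_ne_zero.2 (det_ne_zero_of_sum_col_lt_diag fun k => ?_)
  have hsplit := add_sum_erase univ (fun i => M i k) (mem_univ k)
  have habs : ∑ i ∈ univ.erase k, ‖M i k‖ = -∑ i ∈ univ.erase k, M i k := by
    rw [← sum_neg_distrib]
    exact sum_congr rfl fun i hi => by
      rw [Real.norm_eq_abs, abs_of_nonpos (hoff i k (ne_of_mem_erase hi))]
  rw [habs, Real.norm_eq_abs]
  linarith [le_abs_self (M k k), hcol k]

variable [DecidableEq ι] {d : ι → ℝ} {τ : ℝ} {N : Matrix ι ι ℝ}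

theorem diagonal_add_smul_apply_le_zero (hτ : 0 ≤ τ) (hoff : ∀ i j, i ≠ j → N i j ≤ 0)
    {i j : ι} (hij : i ≠ j) : (diagonal d + τ • N) i j ≤ 0 := by
  simpa [diagonal_apply_ne _ hij] using mul_nonpos_of_nonneg_of_nonpos hτ (hoff i j hij)

theorem le_colSum_diagonal_add_smul [Fintype ι] (hτ : 0 ≤ τ) (hcol : ∀ j, 0 ≤ ∑ i, N i j)
    (j : ι) :
    d j ≤ ∑ i, (diagonal d + τ • N) i j := by
  simp only [add_apply, smul_apply, smul_eq_mul, sum_add_distrib, ← mul_sum, diagonal_apply,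
    sum_ite_eq', mem_univ, if_true]
  linarith [mul_nonneg hτ (hcol j)]

theorem isUnit_det_diagonal_add_smul [Fintype ι] (hd : ∀ k, 0 < d k) (hτ : 0 ≤ τ)
    (hoff : ∀ i j, i ≠ j → N i j ≤ 0) (hcol : ∀ j, 0 ≤ ∑ i, N i j) :
    IsUnit (diagonal d + τ • N).det :=
  isUnit_det_of_colSum_pos _ (fun _ _ hij => diagonal_add_smul_apply_le_zero hτ hoff hij)
    fun j => (hd j).trans_le (le_colSum_diagonal_add_smul hτ hcol j)

theorem diagonal_add_smul_inv_mulVec_mem_Ioc [Fintype ι] (hd : ∀ k, 0 < d k)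
    (hτ : 0 ≤ τ) (hoff : ∀ i j, i ≠ j → N i j ≤ 0) (hcol : ∀ j, 0 ≤ ∑ i, N i j)
    {F : ι → ℝ} (hF : ∀ k, 0 < F k) (k : ι) :
    ((diagonal d + τ • N)⁻¹ *ᵥ F) k ∈ Set.Ioc 0 ((∑ j, F j) / d k) := by
  set M := diagonal d + τ • N
  set x := M⁻¹ *ᵥ F
  have hMx : M *ᵥ x = F := by
    rw [mulVec_mulVec, mul_nonsing_inv _ (isUnit_det_diagonal_add_smul hd hτ hoff hcol),
      one_mulVec]
  have hMoff : ∀ i j, i ≠ j → M i j ≤ 0 := fun _ _ hij =>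
    diagonal_add_smul_apply_le_zero hτ hoff hij
  have hMcol : ∀ j, 0 ≤ ∑ i, M i j := fun j =>
    (hd j).le.trans (le_colSum_diagonal_add_smul hτ hcol j)
  have hx : ∀ j, 0 < x j := M.pos_of_mulVec_pos hMoff hMcol (by rwa [hMx])
  refine ⟨hx k, (le_div_iff₀ (hd k)).2 ?_⟩
  calc x k * d k ≤ (∑ i, M i k) * x k := by
        rw [mul_comm]
        exact mul_le_mul_of_nonneg_right (le_colSum_diagonal_add_smul hτ hcol k) (hx k).le
    _ ≤ ∑ i, (M *ᵥ x) i := M.colSum_mul_le_sum_mulVec hMcol (fun j => (hx j).le) k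
    _ = ∑ j, F j := by rw [hMx]

end Matrix

theorem LipschitzOnWith.exists_unique_isFixedPt_tendsto_iterate {α : Type*} [MetricSpace α]
    {f : α → α} {s : Set α} {K : NNReal} (hf : LipschitzOnWith K f s) (hK : K < 1)
    (hs : IsComplete s) (hmaps : Set.MapsTo f s s) {x : α} (hx : x ∈ s) :
    ∃ y ∈ s, IsFixedPt f y ∧ (∀ z ∈ s, IsFixedPt f z → z = y) ∧
      Tendsto (fun l => f^[l] x) atTop (𝓝 y) := by
  have hc : ContractingWith K (hmaps.restrict f s s) := ⟨hK, hf.mapsToRestrict hmaps⟩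
  obtain ⟨y, hys, hfix, htend, -⟩ := hc.exists_fixedPoint' hs hmaps hx (edist_ne_top _ _)
  refine ⟨y, hys, hfix, fun z hzs hz => ?_, htend⟩
  exact congrArg Subtype.val
    (hc.fixedPoint_unique' (x := ⟨z, hzs⟩) (y := ⟨y, hys⟩) (Subtype.ext hz) (Subtype.ext hfix))

theorem box_eq_Icc (n : ℕ) (c : Fin n → ℝ) : box n c = Set.Icc 0 c :=
  Set.ext fun _ => forall_and

theorem isClosed_box (n : ℕ) (c : Fin n → ℝ) : IsClosed (box n c) :=
  box_eq_Icc n c ▸ isClosed_Icc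

section Gummel

variable {n : ℕ} {d : Fin n → ℝ} {τ : ℝ} {Atil : (Fin n → ℝ) → Matrix (Fin n) (Fin n) ℝ}
  {F : Fin n → ℝ} {P : Fin n → ℝ}

theorem diagonal_add_smul_mulVec_gummelMap (hdet : IsUnit (diagonal d + τ • Atil P).det) :
    (diagonal d + τ • Atil P) *ᵥ gummelMap d τ Atil F P = F := by
  rw [gummelMap, mulVec_mulVec, mul_nonsing_inv _ hdet, one_mulVec]

theorem isFixedPt_gummelMap_iff (hdet : IsUnit (diagonal d + τ • Atil P).det) :
    IsFixedPt (gummelMap d τ Atil F) P ↔ (diagonal d + τ • Atil P) *ᵥ P = F := by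
  constructor
  · intro hfix
    have h := diagonal_add_smul_mulVec_gummelMap (F := F) hdet
    rwa [hfix.eq] at h
  · intro hP
    rw [IsFixedPt, gummelMap, ← hP, mulVec_mulVec, nonsing_inv_mul _ hdet, one_mulVec]

end Gummel

section SupNorm

variable {ι : Type*} [Fintype ι]

theorem mul_norm_le_norm_diagonal_mulVec [DecidableEq ι] {d : ι → ℝ} {δ : ℝ}
    (hδ : ∀ k, δ ≤ d k) (e : ι → ℝ) : δ * ‖e‖ ≤ ‖diagonal d *ᵥ e‖ := by
  rcases le_or_gt δ 0 with hδ0 | hδ0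
  · exact (mul_nonpos_of_nonpos_of_nonneg hδ0 (norm_nonneg e)).trans (norm_nonneg _)
  rw [← le_div_iff₀' hδ0, pi_norm_le_iff_of_nonneg (by positivity)]
  intro k
  rw [le_div_iff₀' hδ0]
  calc δ * ‖e k‖ ≤ ‖d k‖ * ‖e k‖ :=
        mul_le_mul_of_nonneg_right ((hδ k).trans (le_abs_self _)) (norm_nonneg _)
    _ = ‖(diagonal d *ᵥ e) k‖ := by rw [mulVec_diagonal, norm_mul]
    _ ≤ ‖diagonal d *ᵥ e‖ := norm_le_pi_norm _ k

attribute [local instance] Matrix.linftyOpNormedAddCommGroup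

theorem mul_norm_sub_le_of_diagonal_add_smul_mulVec_eq [DecidableEq ι] {d : ι → ℝ} {δ τ : ℝ}
    (hδ : ∀ k, δ ≤ d k) (hτ : 0 ≤ τ) {N N' : Matrix ι ι ℝ} {x y F : ι → ℝ}
    (hx : (diagonal d + τ • N) *ᵥ x = F) (hy : (diagonal d + τ • N') *ᵥ y = F) :
    δ * ‖x - y‖ ≤ τ * (‖N' - N‖ * ‖y‖) + τ * (‖N‖ * ‖x - y‖) := by
  have hdiff : diagonal d *ᵥ (x - y) = τ • ((N' - N) *ᵥ y) - τ • (N *ᵥ (x - y)) := by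
    simp only [add_mulVec, smul_mulVec] at hx hy
    simp only [mulVec_sub, sub_mulVec, smul_sub]
    linear_combination hx - hy
  calc δ * ‖x - y‖ ≤ ‖diagonal d *ᵥ (x - y)‖ := mul_norm_le_norm_diagonal_mulVec hδ _
    _ ≤ τ * ‖(N' - N) *ᵥ y‖ + τ * ‖N *ᵥ (x - y)‖ := by
        rw [hdiff]
        refine (norm_sub_le _ _).trans_eq ?_
        rw [norm_smul, norm_smul, Real.norm_of_nonneg hτ]
    _ ≤ τ * (‖N' - N‖ * ‖y‖) + τ * (‖N‖ * ‖x - y‖) := by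
        gcongr <;> exact linfty_opNorm_mulVec _ _

variable {n : ℕ} [NeZero n]

theorem vecInfNorm_eq_norm (v : Fin n → ℝ) : vecInfNorm v = ‖v‖ := by
  refine le_antisymm (sup'_le _ _ fun k _ => norm_le_pi_norm v k) ?_
  refine (pi_norm_le_iff_of_nonneg ?_).2 fun k => ?_
  · exact (abs_nonneg _).trans (le_sup' (fun k => |v k|) (mem_univ 0))
  · exact le_sup' (fun k => |v k|) (mem_univ k)

theorem matInfNorm_eq_norm (M : Matrix (Fin n) (Fin n) ℝ) : matInfNorm M = ‖M‖ := by
  rw [linfty_opNorm_def, matInfNorm, ← sup'_eq_sup univ_nonempty,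
    apply_sup'_eq_sup'_comp _ _ NNReal.coe_max]
  refine sup'_congr _ rfl fun i _ => ?_
  simp [Real.norm_eq_abs]

variable {d : Fin n → ℝ} {τ : ℝ}
  {Atil : (Fin n → ℝ) → Matrix (Fin n) (Fin n) ℝ} {F : Fin n → ℝ} {s : Set (Fin n → ℝ)}
  {C CL : ℝ}

theorem norm_gummelMap_sub_le {δ : ℝ} (hδ0 : 0 < δ) (hδ : ∀ k, δ ≤ d k) (hτ : 0 ≤ τ)
    (hdet : ∀ P ∈ s, IsUnit (diagonal d + τ • Atil P).det)
    (hAbound : ∀ P ∈ s, matInfNorm (Atil P) ≤ C)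
    (hphibound : ∀ P ∈ s, vecInfNorm (gummelMap d τ Atil F P) ≤ C)
    (hLip : ∀ P ∈ s, ∀ Q ∈ s, matInfNorm (Atil P - Atil Q) ≤ CL * vecInfNorm (P - Q))
    (hτC : 2 * τ * C ≤ δ) {P Q : Fin n → ℝ} (hP : P ∈ s) (hQ : Q ∈ s) :
    ‖gummelMap d τ Atil F P - gummelMap d τ Atil F Q‖ ≤ 2 * τ * CL * C / δ * ‖P - Q‖ := by
  have hAP : ‖Atil P‖ ≤ C := by rw [← matInfNorm_eq_norm]; exact hAbound P hP
  have hφQ : ‖gummelMap d τ Atil F Q‖ ≤ C := by rw [← vecInfNorm_eq_norm]; exact hphibound Q hQ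
  have hAQP : ‖Atil Q - Atil P‖ ≤ CL * ‖P - Q‖ := by
    simpa only [matInfNorm_eq_norm, vecInfNorm_eq_norm, norm_sub_rev Q P] using hLip Q hQ P hP
  have hperturb := mul_norm_sub_le_of_diagonal_add_smul_mulVec_eq (F := F) hδ hτ
    (diagonal_add_smul_mulVec_gummelMap (hdet P hP))
    (diagonal_add_smul_mulVec_gummelMap (hdet Q hQ))
  have hLipTerm : ‖Atil Q - Atil P‖ * ‖gummelMap d τ Atil F Q‖ ≤ CL * ‖P - Q‖ * C :=
    mul_le_mul hAQP hφQ (norm_nonneg _) ((norm_nonneg _).trans hAQP)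
  set E := ‖gummelMap d τ Atil F P - gummelMap d τ Atil F Q‖
  have hE : 0 ≤ E := norm_nonneg _
  have hAbsorbed : ‖Atil P‖ * E ≤ C * E := mul_le_mul_of_nonneg_right hAP hE
  rw [div_mul_eq_mul_div, le_div_iff₀ hδ0]
  linarith [mul_le_mul_of_nonneg_left hLipTerm hτ, mul_le_mul_of_nonneg_left hAbsorbed hτ,
    mul_le_mul_of_nonneg_right hτC hE]

theorem exists_lipschitzOnWith_gummelMap (hd : ∀ k, 0 < d k) (hτ : 0 < τ) (hCL : 1 ≤ CL)
    (hdet : ∀ P ∈ s, IsUnit (diagonal d + τ • Atil P).det)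
    (hAbound : ∀ P ∈ s, matInfNorm (Atil P) ≤ C)
    (hphibound : ∀ P ∈ s, vecInfNorm (gummelMap d τ Atil F P) ≤ C)
    (hLip : ∀ P ∈ s, ∀ Q ∈ s, matInfNorm (Atil P - Atil Q) ≤ CL * vecInfNorm (P - Q))
    (hτC : τ < (univ.inf' univ_nonempty d) / (2 * CL * C)) :
    ∃ K : NNReal, K < 1 ∧ LipschitzOnWith K (gummelMap d τ Atil F) s := by
  set δ := univ.inf' univ_nonempty d
  have hδ0 : 0 < δ := (lt_inf'_iff _).2 fun k _ => hd k
  have hδ : ∀ k, δ ≤ d k := fun k => inf'_le _ (mem_univ k)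
  -- For `C ≤ 0` the threshold `δ / (2 * CL * C)` is `≤ 0` (Lean's `x / 0 = 0` included).
  have hC : 0 < C := by
    by_contra! hC
    have : δ / (2 * CL * C) ≤ 0 := div_nonpos_of_nonneg_of_nonpos hδ0.le (by nlinarith)
    linarith
  have hq : 2 * τ * CL * C < δ := by
    have := (lt_div_iff₀ (by positivity)).1 hτC
    linarith
  refine ⟨Real.toNNReal (2 * τ * CL * C / δ), ?_, LipschitzOnWith.of_dist_le' fun P hP Q hQ => ?_⟩
  · rwa [Real.toNNReal_lt_one, div_lt_one hδ0]
  · simp only [dist_eq_norm]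
    exact norm_gummelMap_sub_le hδ0 hδ hτ.le hdet hAbound hphibound hLip
      (by nlinarith [mul_pos hτ hC]) hP hQ

end SupNorm

theorem gummel_iteration_well_defined_positive_convergent_general
    (n : ℕ) [NeZero n] (d : Fin n → ℝ) (hd : ∀ k, 0 < d k)
    (τ : ℝ) (hτ : 0 < τ) (F : Fin n → ℝ) (hF : ∀ k, 0 < F k)
    (Atil : (Fin n → ℝ) → Matrix (Fin n) (Fin n) ℝ)
    (hoff : ∀ P ∈ box n fun k => (∑ j, F j) / d k,
      ∀ i j, i ≠ j → Atil P i j ≤ 0)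
    (hcol : ∀ P ∈ box n fun k => (∑ j, F j) / d k,
      ∀ j, 0 ≤ ∑ i, Atil P i j)
    (C CL : ℝ) (hCL : 1 ≤ CL)
    (hAbound : ∀ P ∈ box n fun k => (∑ j, F j) / d k,
      matInfNorm (Atil P) ≤ C)
    (hphibound : ∀ P ∈ box n fun k => (∑ j, F j) / d k,
      vecInfNorm (gummelMap d τ Atil F P) ≤ C)
    (hLip : ∀ P ∈ box n fun k => (∑ j, F j) / d k,
      ∀ Q ∈ box n fun k => (∑ j, F j) / d k,
      matInfNorm (Atil P - Atil Q) ≤ CL * vecInfNorm (P - Q))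
    (hτC : τ < (Finset.univ.inf' Finset.univ_nonempty d) / (2 * CL * C)) :
    ∀ P0 ∈ box n fun k => (∑ j, F j) / d k,
      (∀ l : ℕ,
        IsUnit (Matrix.diagonal d + τ • Atil ((gummelMap d τ Atil F)^[l] P0)).det) ∧
      (∀ l : ℕ, 1 ≤ l → ∀ k,
        0 < (gummelMap d τ Atil F)^[l] P0 k ∧
        (gummelMap d τ Atil F)^[l] P0 k ≤ (∑ j, F j) / d k) ∧
      ∃ Pstar ∈ box n fun k => (∑ j, F j) / d k,
        (Matrix.diagonal d + τ • Atil Pstar) *ᵥ Pstar = F ∧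
        (∀ Q ∈ box n fun k => (∑ j, F j) / d k,
          (Matrix.diagonal d + τ • Atil Q) *ᵥ Q = F → Q = Pstar) ∧
        Filter.Tendsto (fun l => (gummelMap d τ Atil F)^[l] P0)
          Filter.atTop (nhds Pstar) := by
  intro P0 hP0
  set s := box n fun k => (∑ j, F j) / d k
  set φ := gummelMap d τ Atil F
  have hdet : ∀ P ∈ s, IsUnit (diagonal d + τ • Atil P).det := fun P hP =>
    isUnit_det_diagonal_add_smul hd hτ.le (hoff P hP) (hcol P hP)
  have hφ : ∀ P ∈ s, ∀ k, φ P k ∈ Set.Ioc 0 ((∑ j, F j) / d k) := fun P hP =>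
    diagonal_add_smul_inv_mulVec_mem_Ioc hd hτ.le (hoff P hP) (hcol P hP) hF
  have hmaps : Set.MapsTo φ s s := fun P hP k => ⟨(hφ P hP k).1.le, (hφ P hP k).2⟩
  obtain ⟨K, hK, hφLip⟩ :=
    exists_lipschitzOnWith_gummelMap hd hτ hCL hdet hAbound hphibound hLip hτC
  obtain ⟨Pstar, hPstar, hfix, huniq, htend⟩ :=
    hφLip.exists_unique_isFixedPt_tendsto_iterate hK (isClosed_box n _).isComplete hmaps hP0
  refine ⟨fun l => hdet _ (hmaps.iterate l hP0), fun l hl k => ?_, Pstar, hPstar,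
    (isFixedPt_gummelMap_iff (hdet Pstar hPstar)).1 hfix,
    fun Q hQ hQF => huniq Q hQ ((isFixedPt_gummelMap_iff (hdet Q hQ)).2 hQF), htend⟩
  obtain ⟨m, rfl⟩ := Nat.exists_eq_add_of_le' hl
  rw [iterate_succ_apply']
  exact hφ _ (hmaps.iterate m hP0) k

/-- well-definedness, strict positivity, boundedness and
convergence of the Gummel iterates `Pˡ⁺¹ = (D + τ Ã(Pˡ))⁻¹ F` to the unique
solution of the nonlinear discrete system, for time steps below the contraction
threshold `τ_C = d/(2 C_L C)` with `d = min_k d_k`. -/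
theorem gummel_iteration_well_defined_positive_convergent
    (n : ℕ) [NeZero n] (d : Fin n → ℝ) (hd : ∀ k, 0 < d k)
    (τ : ℝ) (hτ : 0 < τ) (F : Fin n → ℝ) (hF : ∀ k, 0 < F k)
    (Atil : (Fin n → ℝ) → Matrix (Fin n) (Fin n) ℝ)
    (hcont : ContinuousOn Atil (box n fun k => (∑ j, F j) / d k))
    (hoff : ∀ P ∈ box n fun k => (∑ j, F j) / d k,
      ∀ i j, i ≠ j → Atil P i j ≤ 0)
    (hcol : ∀ P ∈ box n fun k => (∑ j, F j) / d k,
      ∀ j, 0 ≤ ∑ i, Atil P i j)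
    (C CL : ℝ) (hC : 0 ≤ C) (hCL : 1 ≤ CL)
    (hAbound : ∀ P ∈ box n fun k => (∑ j, F j) / d k,
      matInfNorm (Atil P) ≤ C)
    (hphibound : ∀ P ∈ box n fun k => (∑ j, F j) / d k,
      vecInfNorm (gummelMap d τ Atil F P) ≤ C)
    (hLip : ∀ P ∈ box n fun k => (∑ j, F j) / d k,
      ∀ Q ∈ box n fun k => (∑ j, F j) / d k,
      matInfNorm (Atil P - Atil Q) ≤ CL * vecInfNorm (P - Q))
    (hτC : τ < (Finset.univ.inf' Finset.univ_nonempty d) / (2 * CL * C)) :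
    ∀ P0 ∈ box n fun k => (∑ j, F j) / d k,
      (∀ l : ℕ,
        IsUnit (Matrix.diagonal d + τ • Atil ((gummelMap d τ Atil F)^[l] P0)).det) ∧
      (∀ l : ℕ, 1 ≤ l → ∀ k,
        0 < (gummelMap d τ Atil F)^[l] P0 k ∧
        (gummelMap d τ Atil F)^[l] P0 k ≤ (∑ j, F j) / d k) ∧
      ∃ Pstar ∈ box n fun k => (∑ j, F j) / d k,
        (Matrix.diagonal d + τ • Atil Pstar) *ᵥ Pstar = F ∧
        (∀ Q ∈ box n fun k => (∑ j, F j) / d k,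
          (Matrix.diagonal d + τ • Atil Q) *ᵥ Q = F → Q = Pstar) ∧
        Filter.Tendsto (fun l => (gummelMap d τ Atil F)^[l] P0)
          Filter.atTop (nhds Pstar) :=
  gummel_iteration_well_defined_positive_convergent_general n d hd τ hτ F hF Atil hoff hcol C CL hCL
    hAbound hphibound hLip hτC
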